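/- arXiv:2411.08796 — 2 statements merged into one kernel-verified Lean document; each statement's English description precedes it below -/
import Mathlib

section
/- Let G be a kernel on the real line, i.e. a map assigning to each x ∈ ℝ a σ-finite Borel measure G(x,·) on ℝ. Let f : ℝ → ℝ be Borel measurable with ∫_ℝ |f(y)| G(x,dy) < ∞ for every x, and define g(x) = ∫_ℝ f(y) G(x,dy). Let x* ∈ ℝ be such that g(x*) = ∫_{[x*,∞)} f(y) G(x*,dy) (equivalently, ∫_{(−∞,x*)} f(y) G(x*,dy) = 0). Assume that for every x > x* there exists a constant c_x ≥ 0 such that G(x,H) = c_x · G(x*,H) for every Borel set H ⊆ (−∞,x*). Then for every x > x*, g(x) = ∫_{[x*,∞)} f(y) G(x,dy). -/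
open MeasureTheory Set
open scoped NNReal ENNReal

/-- Kernel-theoretic form of Lemma 3.2: if the representing identity
`g x = ∫ f dG(x,·)` holds, the threshold `x*` satisfies
`g x* = ∫_{[x*,∞)} f dG(x*,·)`, and for every `x > x*` the measure `G(x,·)`
restricted to `(-∞, x*)` is a nonnegative multiple of `G(x*,·)`, then
`g x = ∫_{[x*,∞)} f dG(x,·)` for every `x > x*`. -/
theorem stmt_0
    (G : ℝ → Measure ℝ) (hGsf : ∀ x, SigmaFinite (G x))
    (f : ℝ → ℝ) (hf : Measurable f)
    (hfint : ∀ x, Integrable f (G x))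
    (g : ℝ → ℝ) (hg : ∀ x, g x = ∫ y, f y ∂(G x))
    (xstar : ℝ)
    (hxstar : g xstar = ∫ y in Ici xstar, f y ∂(G xstar))
    (hprop : ∀ x, xstar < x → ∃ c : ℝ≥0,
      ∀ H : Set ℝ, MeasurableSet H → H ⊆ Iio xstar →
        G x H = (c : ℝ≥0∞) * G xstar H) :
    ∀ x, xstar < x → g x = ∫ y in Ici xstar, f y ∂(G x) := by
  intro x hx
  obtain ⟨c, hc⟩ := hprop x hx
  -- restricted measures are proportional
  have hres : (G x).restrict (Iio xstar) = c • (G xstar).restrict (Iio xstar) := by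
    ext s hs
    rw [Measure.restrict_apply hs, Measure.smul_apply, Measure.restrict_apply hs,
      hc (s ∩ Iio xstar) (hs.inter measurableSet_Iio) inter_subset_right]
    simp [ENNReal.smul_def]
  -- integral of f over Iio xstar w.r.t. G xstar is zero
  have hsplit0 : (∫ y, f y ∂(G xstar)) =
      (∫ y in Iio xstar, f y ∂(G xstar)) + ∫ y in Ici xstar, f y ∂(G xstar) := by
    rw [← setIntegral_union (Iio_disjoint_Ici le_rfl) measurableSet_Ici
      ((hfint xstar).integrableOn) ((hfint xstar).integrableOn), Iio_union_Ici,
      Measure.restrict_univ]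
  have h0 : (∫ y in Iio xstar, f y ∂(G xstar)) = 0 := by
    have := hxstar
    rw [hg xstar, hsplit0] at this
    linarith
  have hsplit : (∫ y, f y ∂(G x)) =
      (∫ y in Iio xstar, f y ∂(G x)) + ∫ y in Ici xstar, f y ∂(G x) := by
    rw [← setIntegral_union (Iio_disjoint_Ici le_rfl) measurableSet_Ici
      ((hfint x).integrableOn) ((hfint x).integrableOn), Iio_union_Ici,
      Measure.restrict_univ]
  have hzero : (∫ y in Iio xstar, f y ∂(G x)) = 0 := by
    rw [show (∫ y in Iio xstar, f y ∂(G x)) = ∫ y, f y ∂((G x).restrict (Iio xstar)) from rfl,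
      hres, integral_smul_nnreal_measure]
    simp [h0]
  rw [hg x, hsplit, hzero, zero_add]
end

section
/- Fix real parameters α > 0, β > 0, γ > 0, λ > 0 and x ∈ ℝ. For z > 0 define H(z) = e^{−z²/(4γ)} · z^{−α/γ} · (β − iz)^{−λ/γ} (real power of z, principal complex power of β − iz), and define Ĝ(z) = (H(z)/γ) · ∫_0^z e^{iζx} e^{ζ²/(4γ)} ζ^{α/γ − 1} (β − iζ)^{λ/γ} dζ, the integrand being 1/(ζ H(ζ)) times e^{iζx}. Then Ĝ is differentiable on (0,∞) and for every z > 0: (α + z²/2 − iλz/(β − iz)) · Ĝ(z) + γ z Ĝ′(z) = e^{izx}. -/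
open MeasureTheory Set Complex Topology Filter

private lemma stmt7_slit {β : ℝ} (hβ : 0 < β) (ζ : ℝ) :
    ((β : ℂ) - I * ζ) ∈ Complex.slitPlane := by
  rw [Complex.mem_slitPlane_iff]
  left
  simp [Complex.sub_re, Complex.mul_re, hβ]

private lemma stmt7_ne {β : ℝ} (hβ : 0 < β) (ζ : ℝ) : ((β : ℂ) - I * ζ) ≠ 0 :=
  Complex.slitPlane_ne_zero (stmt7_slit hβ ζ)

/-- The function `Ĝ(z) = (H(z)/γ) ∫_0^z e^{iζx} e^{ζ²/(4γ)} ζ^{α/γ-1} (β-iζ)^{λ/γ} dζ`,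
with `H(z) = e^{-z²/(4γ)} z^{-α/γ} (β - iz)^{-λ/γ}`, is differentiable on
`(0,∞)` and solves the ODE
`(α + z²/2 - iλz/(β - iz)) Ĝ(z) + γ z Ĝ'(z) = e^{izx}` there. -/
theorem stmt_7
    (α β γ lam x : ℝ) (hα : 0 < α) (hβ : 0 < β) (hγ : 0 < γ) (hlam : 0 < lam)
    (H Ghat : ℝ → ℂ)
    (hH : ∀ z : ℝ, 0 < z →
      H z = (Real.exp (-z ^ 2 / (4 * γ)) : ℂ) *
        ((z ^ (-(α / γ)) : ℝ) : ℂ) *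
        ((β : ℂ) - I * z) ^ (-(lam / γ) : ℂ))
    (hGhat : ∀ z : ℝ, 0 < z →
      Ghat z = H z / γ *
        ∫ ζ in (0 : ℝ)..z, Complex.exp (I * ζ * x) *
          (Real.exp (ζ ^ 2 / (4 * γ)) : ℂ) *
          ((ζ ^ (α / γ - 1) : ℝ) : ℂ) *
          ((β : ℂ) - I * ζ) ^ ((lam / γ : ℝ) : ℂ)) :
    ∀ z : ℝ, 0 < z →
      DifferentiableAt ℝ Ghat z ∧
      ((α : ℂ) + (z : ℂ) ^ 2 / 2 - I * lam * z / ((β : ℂ) - I * z)) * Ghat z +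
          (γ : ℂ) * z * deriv Ghat z = Complex.exp (I * z * x) := by
  intro z hz
  have hγ0 : γ ≠ 0 := hγ.ne'
  have hγ' : (γ : ℂ) ≠ 0 := by exact_mod_cast hγ0
  have hz' : (z : ℂ) ≠ 0 := by exact_mod_cast hz.ne'
  have hne : ((β : ℂ) - I * z) ≠ 0 := stmt7_ne hβ z
  -- the integrand
  set f : ℝ → ℂ := fun ζ => Complex.exp (I * ζ * x) *
      (Real.exp (ζ ^ 2 / (4 * γ)) : ℂ) *
      ((ζ ^ (α / γ - 1) : ℝ) : ℂ) *
      ((β : ℂ) - I * ζ) ^ ((lam / γ : ℝ) : ℂ) with hfdef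
  set F : ℝ → ℂ := fun w => ∫ ζ in (0 : ℝ)..w, f ζ with hFdef
  -- continuity of the integrand away from 0
  have hfc : ∀ ζ : ℝ, ζ ≠ 0 → ContinuousAt f ζ := by
    intro ζ hζ
    have h1 : ContinuousAt (fun ζ : ℝ => Complex.exp (I * ζ * x)) ζ := by fun_prop
    have h2 : ContinuousAt (fun ζ : ℝ => ((Real.exp (ζ ^ 2 / (4 * γ)) : ℝ) : ℂ)) ζ := by
      fun_prop
    have h3 : ContinuousAt (fun ζ : ℝ => ((ζ ^ (α / γ - 1) : ℝ) : ℂ)) ζ :=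
      Complex.continuous_ofReal.continuousAt.comp
        (Real.continuousAt_rpow_const ζ _ (Or.inl hζ))
    have h4 : ContinuousAt (fun ζ : ℝ => ((β : ℂ) - I * ζ) ^ ((lam / γ : ℝ) : ℂ)) ζ := by
      have hout : ContinuousAt (fun w : ℂ => w ^ ((lam / γ : ℝ) : ℂ)) ((β : ℂ) - I * ζ) :=
        continuousAt_cpow_const (stmt7_slit hβ ζ)
      have hsub : ContinuousAt (fun ζ : ℝ => (β : ℂ) - I * ζ) ζ := by fun_prop
      exact ContinuousAt.comp (x := ζ) hout hsub
    exact ((h1.mul h2).mul h3).mul h4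
  -- interval integrability of the integrand
  have hfi : IntervalIntegrable f volume 0 z := by
    have hr : IntervalIntegrable (fun ζ : ℝ => ζ ^ (α / γ - 1)) volume 0 z :=
      intervalIntegral.intervalIntegrable_rpow' (by
        have : 0 < α / γ := div_pos hα hγ
        linarith)
    have hr' : IntervalIntegrable (fun ζ : ℝ => ((ζ ^ (α / γ - 1) : ℝ) : ℂ)) volume 0 z :=
      ⟨Complex.ofRealCLM.integrable_comp hr.1, Complex.ofRealCLM.integrable_comp hr.2⟩
    have hg : ContinuousOn (fun ζ : ℝ => Complex.exp (I * ζ * x) *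
        (Real.exp (ζ ^ 2 / (4 * γ)) : ℂ) *
        ((β : ℂ) - I * ζ) ^ ((lam / γ : ℝ) : ℂ)) (uIcc 0 z) := by
      apply ContinuousOn.mul
      · fun_prop
      · intro ζ _
        have hout : ContinuousAt (fun w : ℂ => w ^ ((lam / γ : ℝ) : ℂ)) ((β : ℂ) - I * ζ) :=
          continuousAt_cpow_const (stmt7_slit hβ ζ)
        have hsub : ContinuousAt (fun ζ : ℝ => (β : ℂ) - I * ζ) ζ := by fun_prop
        exact (ContinuousAt.comp (x := ζ) hout hsub).continuousWithinAt
    have h := hr'.mul_continuousOn hg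
    have heq : (fun ζ : ℝ => ((ζ ^ (α / γ - 1) : ℝ) : ℂ) *
        (Complex.exp (I * ζ * x) * (Real.exp (ζ ^ 2 / (4 * γ)) : ℂ) *
          ((β : ℂ) - I * ζ) ^ ((lam / γ : ℝ) : ℂ))) = f := by
      funext ζ
      rw [hfdef]
      ring
    exact heq ▸ h
  -- derivative of F
  have hFder : HasDerivAt F (f z) z := by
    have hmeas : StronglyMeasurableAtFilter f (𝓝 z) volume := by
      refine ⟨Ioi 0, Ioi_mem_nhds hz, ?_⟩
      exact ContinuousOn.aestronglyMeasurable
        (fun w hw => (hfc w (ne_of_gt hw)).continuousWithinAt) measurableSet_Ioi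
    exact intervalIntegral.integral_hasDerivAt_right hfi hmeas (hfc z hz.ne')
  -- the three factors of H
  set Eℂ : ℂ := (Real.exp (-z ^ 2 / (4 * γ)) : ℂ) with hEdef
  set Pℂ : ℂ := ((z ^ (-(α / γ)) : ℝ) : ℂ) with hPdef
  set Cℂ : ℂ := ((β : ℂ) - I * z) ^ (-(lam / γ) : ℂ) with hCdef
  have hEd : HasDerivAt (fun w : ℝ => ((Real.exp (-w ^ 2 / (4 * γ)) : ℝ) : ℂ))
      (-((z : ℂ) / (2 * γ)) * Eℂ) z := by
    have hin : HasDerivAt (fun w : ℝ => -w ^ 2 / (4 * γ)) (-(z / (2 * γ))) z := by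
      have h := ((hasDerivAt_pow 2 z).neg).div_const (4 * γ)
      refine HasDerivAt.congr_deriv (f := fun w : ℝ => -w ^ 2 / (4 * γ)) h ?_
      field_simp
      ring
    have h := ((Real.hasDerivAt_exp (-z ^ 2 / (4 * γ))).comp z hin).ofReal_comp
    refine HasDerivAt.congr_deriv (f := fun w : ℝ => ((Real.exp (-w ^ 2 / (4 * γ)) : ℝ) : ℂ)) h ?_
    rw [hEdef]
    push_cast
    ring
  have hPd : HasDerivAt (fun w : ℝ => ((w ^ (-(α / γ)) : ℝ) : ℂ))
      (-((α : ℂ) / γ) * (Pℂ / z)) z := by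
    have h := (Real.hasDerivAt_rpow_const (p := -(α / γ)) (Or.inl hz.ne')).ofReal_comp
    convert h using 1
    rw [hPdef, Real.rpow_sub hz, Real.rpow_one]
    push_cast
    ring
  have hCd : HasDerivAt (fun w : ℝ => ((β : ℂ) - I * w) ^ (-(lam / γ) : ℂ))
      (I * ((lam : ℂ) / γ) * (Cℂ / ((β : ℂ) - I * z))) z := by
    have hbase : HasDerivAt (fun u : ℂ => (β : ℂ) - I * u) (-I) (z : ℂ) := by
      simpa using ((hasDerivAt_id (z : ℂ)).const_mul I).const_sub (β : ℂ)
    have h := (hbase.cpow_const (c := -((lam : ℂ) / γ)) (stmt7_slit hβ z)).comp_ofReal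
    convert h using 1
    rw [Complex.cpow_sub _ _ hne, Complex.cpow_one, hCdef]
    ring
  have hHder : HasDerivAt H
      ((-((z : ℂ) / (2 * γ)) * Eℂ * Pℂ + Eℂ * (-((α : ℂ) / γ) * (Pℂ / z))) * Cℂ +
        Eℂ * Pℂ * (I * ((lam : ℂ) / γ) * (Cℂ / ((β : ℂ) - I * z)))) z := by
    have h := (hEd.mul hPd).mul hCd
    apply h.congr_of_eventuallyEq
    filter_upwards [Ioi_mem_nhds hz] with w hw
    exact hH w hw
  set Hd : ℂ := (-((z : ℂ) / (2 * γ)) * Eℂ * Pℂ + Eℂ * (-((α : ℂ) / γ) * (Pℂ / z))) * Cℂ +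
      Eℂ * Pℂ * (I * ((lam : ℂ) / γ) * (Cℂ / ((β : ℂ) - I * z))) with hHddef
  have hGder : HasDerivAt Ghat (Hd / γ * F z + H z / γ * f z) z := by
    have h := (hHder.div_const (γ : ℂ)).mul hFder
    apply h.congr_of_eventuallyEq
    filter_upwards [Ioi_mem_nhds hz] with w hw
    exact hGhat w hw
  refine ⟨hGder.differentiableAt, ?_⟩
  have hHz : H z = Eℂ * Pℂ * Cℂ := by
    rw [hEdef, hPdef, hCdef]; exact hH z hz
  rw [hGder.deriv, hGhat z hz, hHz]
  rw [show F z = intervalIntegral f 0 z volume from rfl]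
  -- key multiplicative identity
  have e1 : Real.exp (-z ^ 2 / (4 * γ)) * Real.exp (z ^ 2 / (4 * γ)) = 1 := by
    rw [← Real.exp_add, show -z ^ 2 / (4 * γ) + z ^ 2 / (4 * γ) = 0 by ring, Real.exp_zero]
  have e2 : z * (z ^ (-(α / γ)) * z ^ (α / γ - 1)) = 1 := by
    rw [← Real.rpow_add hz, show -(α / γ) + (α / γ - 1) = -1 by ring, Real.rpow_neg_one]
    exact mul_inv_cancel₀ hz.ne'
  have e3 : Cℂ * ((β : ℂ) - I * z) ^ ((lam / γ : ℝ) : ℂ) = 1 := by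
    rw [hCdef, show (-(lam / γ) : ℂ) = -((lam / γ : ℝ) : ℂ) by push_cast; ring,
      Complex.cpow_neg]
    refine inv_mul_cancel₀ ?_
    simp [Complex.cpow_eq_zero_iff, hne]
  have key : (z : ℂ) * (Eℂ * Pℂ * Cℂ * f z) = Complex.exp (I * z * x) := by
    have h : (z : ℂ) * (Eℂ * Pℂ * Cℂ * f z) =
        ((Real.exp (-z ^ 2 / (4 * γ)) * Real.exp (z ^ 2 / (4 * γ)) : ℝ) : ℂ) *
        ((z * (z ^ (-(α / γ)) * z ^ (α / γ - 1)) : ℝ) : ℂ) *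
        (Cℂ * ((β : ℂ) - I * z) ^ ((lam / γ : ℝ) : ℂ)) * Complex.exp (I * z * x) := by
      simp only [hfdef, hEdef, hPdef]
      push_cast
      ring
    rw [h, e1, e2, e3]
    push_cast
    ring
  have hcoef : ((α : ℂ) + (z : ℂ) ^ 2 / 2 - I * lam * z / ((β : ℂ) - I * z)) *
      (Eℂ * Pℂ * Cℂ / γ) + (γ : ℂ) * z * (Hd / γ) = 0 := by
    have hzz : (z : ℂ) * (z : ℂ)⁻¹ = 1 := mul_inv_cancel₀ hz'
    have hgg : (γ : ℂ) * (γ : ℂ)⁻¹ = 1 := mul_inv_cancel₀ hγ'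
    have hmix : (γ : ℂ) * (γ : ℂ)⁻¹ * ((z : ℂ) * (z : ℂ)⁻¹) = 1 := by
      rw [hzz, hgg, mul_one]
    rw [hHddef]
    linear_combination (-(Eℂ * Pℂ * Cℂ) * (γ : ℂ)⁻¹ * (z : ℂ) ^ 2 / 2 +
        (Eℂ * Pℂ * Cℂ) * (γ : ℂ)⁻¹ * I * (lam : ℂ) * (z : ℂ) * ((β : ℂ) - I * z)⁻¹) * hgg +
      (-(Eℂ * Pℂ * Cℂ) * (γ : ℂ)⁻¹ * (α : ℂ)) * hmix
  have hγγ : (γ : ℂ) * (γ : ℂ)⁻¹ = 1 := mul_inv_cancel₀ hγ'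
  linear_combination (intervalIntegral f 0 z volume) * hcoef + key +
    ((z : ℂ) * Eℂ * Pℂ * Cℂ * f z) * hγγ
end
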